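/- arXiv:1806.11363 — 2 statements merged into one kernel-verified Lean document; each statement's English description precedes it below -/
import Mathlib

section
/- Let ∇ and ∇* be dual affine connections on a Riemannian manifold (M, g) whose (4,0)-curvature tensors satisfy R = R* (conjugate symmetry). Then R satisfies all Riemannian curvature symmetries: R(X,Y,Z,W) = −R(Y,X,Z,W), the first Bianchi identity R(X,Y,Z,W)+R(Y,Z,X,W)+R(Z,X,Y,W)=0, skew-symmetry in the last two arguments R(X,Y,Z,W) = −R(X,Y,W,Z), and pair symmetry R(X,Y,Z,W) = R(Z,W,X,Y). -/
section DualCurvAux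
variable {C : Type*} [CommRing C] {V : Type*} [LieRing V]

/-- Duality identity: `g(R X Y Z, W) + g(Z, R' X Y W) = 0` (with `R`, `R'` expanded). -/
lemma dual_curv_aux
    (act : V → C → C) (g : V → V → C) (conn conn' : V → V → V)
    (hact_add : ∀ X a b, act X (a + b) = act X a + act X b)
    (hact_bracket : ∀ X Y a, act ⁅X, Y⁆ a = act X (act Y a) - act Y (act X a))
    (hg_addl : ∀ X Y Z, g (X + Y) Z = g X Z + g Y Z)
    (hg_addr : ∀ X Y Z, g X (Y + Z) = g X Y + g X Z)
    (hdual : ∀ X Y Z, act X (g Y Z) = g (conn X Y) Z + g Y (conn' X Z))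
    (X Y Z W : V) :
    g (conn X (conn Y Z) - conn Y (conn X Z) - conn ⁅X, Y⁆ Z) W
      + g Z (conn' X (conn' Y W) - conn' Y (conn' X W) - conn' ⁅X, Y⁆ W) = 0 := by
  have g0l : ∀ W, g 0 W = 0 := by
    intro W
    have h := hg_addl 0 0 W
    rw [add_zero] at h
    exact (left_eq_add.mp h)
  have gnegl : ∀ A W, g (-A) W = - g A W := by
    intro A W
    have h := hg_addl A (-A) W
    rw [add_neg_cancel, g0l] at h
    exact eq_neg_of_add_eq_zero_right h.symm
  have gsubl : ∀ A B W, g (A - B) W = g A W - g B W := by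
    intro A B W
    rw [sub_eq_add_neg, hg_addl, gnegl, sub_eq_add_neg]
  have g0r : ∀ A, g A 0 = 0 := by
    intro A
    have h := hg_addr A 0 0
    rw [add_zero] at h
    exact (left_eq_add.mp h)
  have gnegr : ∀ A B, g A (-B) = - g A B := by
    intro A B
    have h := hg_addr A B (-B)
    rw [add_neg_cancel, g0r] at h
    exact eq_neg_of_add_eq_zero_right h.symm
  have gsubr : ∀ A B D, g A (B - D) = g A B - g A D := by
    intro A B D
    rw [sub_eq_add_neg, hg_addr, gnegr, sub_eq_add_neg]
  have E1 : act X (act Y (g Z W)) =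
      g (conn X (conn Y Z)) W + g (conn Y Z) (conn' X W)
        + g (conn X Z) (conn' Y W) + g Z (conn' X (conn' Y W)) := by
    rw [hdual Y Z W, hact_add, hdual X (conn Y Z) W, hdual X Z (conn' Y W)]
    ring
  have E2 : act Y (act X (g Z W)) =
      g (conn Y (conn X Z)) W + g (conn X Z) (conn' Y W)
        + g (conn Y Z) (conn' X W) + g Z (conn' Y (conn' X W)) := by
    rw [hdual X Z W, hact_add, hdual Y (conn X Z) W, hdual Y Z (conn' X W)]
    ring
  have E3 := hact_bracket X Y (g Z W)
  have E4 := hdual ⁅X, Y⁆ Z W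
  rw [gsubl, gsubl, gsubr, gsubr]
  linear_combination E2 + E4 - E1 - E3

end DualCurvAux

/-- If ∇, ∇* are torsion-free dual affine connections on (M, g) whose
(4,0)-curvature tensors coincide (conjugate symmetry), then R satisfies all the
symmetries of a Riemannian curvature tensor: antisymmetry in the first two slots,
the first Bianchi identity, antisymmetry in the last two slots, and pair symmetry. -/
theorem conjugate_symmetric_curvature_symmetries
    {C : Type*} [CommRing C] [Algebra ℝ C]
    {V : Type*} [LieRing V]
    (act : V → C → C) (g : V → V → C) (conn conn' : V → V → V)
    (hact_add : ∀ X a b, act X (a + b) = act X a + act X b)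
    (hact_bracket : ∀ X Y a, act ⁅X, Y⁆ a = act X (act Y a) - act Y (act X a))
    (hg_symm : ∀ X Y, g X Y = g Y X)
    (hg_addl : ∀ X Y Z, g (X + Y) Z = g X Z + g Y Z)
    (hg_addr : ∀ X Y Z, g X (Y + Z) = g X Y + g X Z)
    (hdual : ∀ X Y Z, act X (g Y Z) = g (conn X Y) Z + g Y (conn' X Z))
    (htf : ∀ X Y, conn X Y - conn Y X = ⁅X, Y⁆)
    (htf' : ∀ X Y, conn' X Y - conn' Y X = ⁅X, Y⁆)
    (R R' : V → V → V → V)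
    (hR : ∀ X Y Z, R X Y Z =
      conn X (conn Y Z) - conn Y (conn X Z) - conn ⁅X, Y⁆ Z)
    (hR' : ∀ X Y Z, R' X Y Z =
      conn' X (conn' Y Z) - conn' Y (conn' X Z) - conn' ⁅X, Y⁆ Z)
    (hconj : ∀ X Y Z W, g (R X Y Z) W = g (R' X Y Z) W) :
    ∀ X Y Z W,
      g (R X Y Z) W = - g (R Y X Z) W ∧
      g (R X Y Z) W + g (R Y Z X) W + g (R Z X Y) W = 0 ∧
      g (R X Y Z) W = - g (R X Y W) Z ∧
      g (R X Y Z) W = g (R Z W X) Y := by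
  -- basic additivity consequences
  have g0l : ∀ W, g 0 W = 0 := by
    intro W
    have h := hg_addl 0 0 W
    rw [add_zero] at h
    exact (left_eq_add.mp h)
  have gnegl : ∀ A W, g (-A) W = - g A W := by
    intro A W
    have h := hg_addl A (-A) W
    rw [add_neg_cancel, g0l] at h
    exact eq_neg_of_add_eq_zero_right h.symm
  have gsubl : ∀ A B W, g (A - B) W = g A W - g B W := by
    intro A B W
    rw [sub_eq_add_neg, hg_addl, gnegl, sub_eq_add_neg]
  have act0 : ∀ X, act X (0 : C) = 0 := by
    intro X
    have h := hact_add X 0 0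
    rw [add_zero] at h
    exact (left_eq_add.mp h)
  -- the swapped duality relation
  have hdual' : ∀ X Y Z, act X (g Y Z) = g (conn' X Y) Z + g Y (conn X Z) := by
    intro X Y Z
    rw [hg_symm Y Z, hdual X Z Y, hg_symm (conn X Z) Y, hg_symm Z (conn' X Y)]
    ring
  -- dual curvature identities
  have D1 : ∀ X Y Z W, g (R X Y Z) W + g Z (R' X Y W) = 0 := by
    intro X Y Z W
    rw [hR, hR']
    exact dual_curv_aux act g conn conn' hact_add hact_bracket hg_addl hg_addr hdual X Y Z W
  have D2 : ∀ X Y Z W, g (R' X Y Z) W + g Z (R X Y W) = 0 := by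
    intro X Y Z W
    rw [hR, hR']
    exact dual_curv_aux act g conn' conn hact_add hact_bracket hg_addl hg_addr hdual' X Y Z W
  -- (3) antisymmetry in the last two slots
  have A3 : ∀ X Y Z W, g (R X Y Z) W = - g (R X Y W) Z := by
    intro X Y Z W
    linear_combination hconj X Y Z W + D2 X Y Z W + hg_symm (R X Y W) Z
  -- key bracket lemma for antisymmetry in the first two slots
  have hbr0 : ∀ (A Z W : V), g (conn A Z) W + g (conn (-A) Z) W = 0 := by
    intro A Z W
    have t1 : conn A Z = conn Z A + ⁅A, Z⁆ := sub_eq_iff_eq_add'.mp (htf A Z)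
    have t2 : conn (-A) Z = conn Z (-A) + ⁅-A, Z⁆ := sub_eq_iff_eq_add'.mp (htf (-A) Z)
    have gt1 : g (conn A Z) W = g (conn Z A) W + g ⁅A, Z⁆ W := by
      rw [t1, hg_addl]
    have gt2 : g (conn (-A) Z) W = g (conn Z (-A)) W + g ⁅-A, Z⁆ W := by
      rw [t2, hg_addl]
    have gneg_br : g ⁅-A, Z⁆ W = - g ⁅A, Z⁆ W := by
      rw [neg_lie, gnegl]
    have s := hdual Z A W
    have s' := hdual Z (-A) W
    have hsum : act Z (g A W) + act Z (g (-A) W) = 0 := by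
      rw [← hact_add, gnegl, add_neg_cancel, act0]
    have hn := gnegl A (conn' Z W)
    linear_combination gt1 + gt2 + gneg_br - s - s' + hsum - hn
  -- (1) antisymmetry in the first two slots
  have A1 : ∀ X Y Z W, g (R X Y Z) W = - g (R Y X Z) W := by
    intro X Y Z W
    have gA : g (R X Y Z) W
        = g (conn X (conn Y Z)) W - g (conn Y (conn X Z)) W - g (conn ⁅X, Y⁆ Z) W := by
      rw [hR, gsubl, gsubl]
    have gB : g (R Y X Z) W
        = g (conn Y (conn X Z)) W - g (conn X (conn Y Z)) W - g (conn (-⁅X, Y⁆) Z) W := by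
      rw [hR, gsubl, gsubl, ← lie_skew]
    have hbr := hbr0 ⁅X, Y⁆ Z W
    linear_combination gA + gB - hbr
  -- weak additivity of conn in its second slot (under g)
  have hconn2 : ∀ (X A B W : V), g (conn X (A + B)) W = g (conn X A) W + g (conn X B) W := by
    intro X A B W
    have h1 := hdual X (A + B) W
    have h2 := hdual X A W
    have h3 := hdual X B W
    rw [hg_addl, hact_add, hg_addl] at h1
    linear_combination h2 + h3 - h1
  -- (2) first Bianchi identity
  have AB : ∀ X Y Z W, g (R X Y Z) W + g (R Y Z X) W + g (R Z X Y) W = 0 := by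
    intro X Y Z W
    have gexp : ∀ A B D, g (R A B D) W
        = g (conn A (conn B D)) W - g (conn B (conn A D)) W - g (conn ⁅A, B⁆ D) W := by
      intro A B D
      rw [hR, gsubl, gsubl]
    have eX := gexp X Y Z
    have eY := gexp Y Z X
    have eZ := gexp Z X Y
    have tsw : ∀ A B : V, conn A B = conn B A + ⁅A, B⁆ := fun A B =>
      sub_eq_iff_eq_add'.mp (htf A B)
    have p1 : g (conn X (conn Y Z)) W = g (conn X (conn Z Y)) W + g (conn X ⁅Y, Z⁆) W := by
      rw [tsw Y Z, hconn2]
    have p2 : g (conn Y (conn Z X)) W = g (conn Y (conn X Z)) W + g (conn Y ⁅Z, X⁆) W := by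
      rw [tsw Z X, hconn2]
    have p3 : g (conn Z (conn X Y)) W = g (conn Z (conn Y X)) W + g (conn Z ⁅X, Y⁆) W := by
      rw [tsw X Y, hconn2]
    have q1 : g (conn X ⁅Y, Z⁆) W = g (conn ⁅Y, Z⁆ X) W + g ⁅X, ⁅Y, Z⁆⁆ W := by
      rw [tsw X ⁅Y, Z⁆, hg_addl]
    have q2 : g (conn Y ⁅Z, X⁆) W = g (conn ⁅Z, X⁆ Y) W + g ⁅Y, ⁅Z, X⁆⁆ W := by
      rw [tsw Y ⁅Z, X⁆, hg_addl]
    have q3 : g (conn Z ⁅X, Y⁆) W = g (conn ⁅X, Y⁆ Z) W + g ⁅Z, ⁅X, Y⁆⁆ W := by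
      rw [tsw Z ⁅X, Y⁆, hg_addl]
    have jac : g ⁅X, ⁅Y, Z⁆⁆ W + g ⁅Y, ⁅Z, X⁆⁆ W + g ⁅Z, ⁅X, Y⁆⁆ W = 0 := by
      rw [← hg_addl, ← hg_addl, lie_jacobi, g0l]
    linear_combination eX + eY + eZ + p1 + p2 + p3 + q1 + q2 + q3 + jac
  -- division by two
  have half : ∀ a : C, a + a = 0 → a = 0 := by
    intro a h
    have ha : a = ((2 : ℝ)⁻¹) • (a + a) := by
      rw [smul_add, ← add_smul]
      norm_num
    rw [ha, h, smul_zero]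
  -- key identity towards pair symmetry: f A B C D = - f D C A B
  have key : ∀ A B C D, g (R A B C) D + g (R D C A) B = 0 := by
    intro A B C D
    apply half
    have c1 := AB B C A D
    have c2 := AB C A D B
    have c3 := AB A D B C
    have c4 := AB D B C A
    have s1 := A3 B C A D
    have s2 := A3 C A B D
    have s3 := A3 A D C B
    have s4 := A3 D B A C
    have t1 : g (R B A D) C = g (R A B C) D := by
      rw [A1 B A D C, A3 A B D C, neg_neg]
    have t2 : g (R C D B) A = g (R D C A) B := by
      rw [A1 C D B A, A3 D C B A, neg_neg]
    linear_combination c1 + c2 + c3 + c4 - s1 - s2 - s3 - s4 - t1 - t2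
  -- (4) pair symmetry
  have A4 : ∀ X Y Z W, g (R X Y Z) W = g (R Z W X) Y := by
    intro X Y Z W
    linear_combination A1 Y X Z W - key Z W X Y
  intro X Y Z W
  exact ⟨A1 X Y Z W, AB X Y Z W, A3 X Y Z W, A4 X Y Z W⟩
end

section
/- Let ∇ and ∇* be dual affine connections on a Riemannian manifold (M, g). If the curvature tensor of ∇ vanishes identically, then the curvature tensor of ∇* vanishes identically. -/
/-- For dual affine connections ∇, ∇* on (M, g) (g nondegenerate),
if the curvature of ∇ vanishes identically then so does the curvature of ∇*. -/
theorem dual_flat_of_flat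
    {C : Type*} [CommRing C] [Algebra ℝ C]
    {V : Type*} [LieRing V]
    (act : V → C → C) (g : V → V → C) (conn conn' : V → V → V)
    (hact_add : ∀ X a b, act X (a + b) = act X a + act X b)
    (hact_bracket : ∀ X Y a, act ⁅X, Y⁆ a = act X (act Y a) - act Y (act X a))
    (hg_addl : ∀ X Y Z, g (X + Y) Z = g X Z + g Y Z)
    (hg_addr : ∀ X Y Z, g X (Y + Z) = g X Y + g X Z)
    (hg_nondeg : ∀ Z, (∀ W, g W Z = 0) → Z = 0)
    (hdual : ∀ X Y Z, act X (g Y Z) = g (conn X Y) Z + g Y (conn' X Z))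
    (R R' : V → V → V → V)
    (hR : ∀ X Y Z, R X Y Z =
      conn X (conn Y Z) - conn Y (conn X Z) - conn ⁅X, Y⁆ Z)
    (hR' : ∀ X Y Z, R' X Y Z =
      conn' X (conn' Y Z) - conn' Y (conn' X Z) - conn' ⁅X, Y⁆ Z)
    (hflat : ∀ X Y Z, R X Y Z = 0) :
    ∀ X Y Z, R' X Y Z = 0 := by
  -- auxiliary facts
  have gzr : ∀ X, g X 0 = 0 := by
    intro X
    have h := hg_addr X 0 0
    rw [add_zero] at h
    exact (left_eq_add.mp h)
  have gzl : ∀ Z, g 0 Z = 0 := by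
    intro Z
    have h := hg_addl 0 0 Z
    rw [add_zero] at h
    exact (left_eq_add.mp h)
  have gsubr : ∀ X A B, g X (A - B) = g X A - g X B := by
    intro X A B
    have h := hg_addr X (A - B) B
    rw [sub_add_cancel] at h
    exact eq_sub_of_add_eq h.symm
  have gsubl : ∀ A B Z, g (A - B) Z = g A Z - g B Z := by
    intro A B Z
    have h := hg_addl (A - B) B Z
    rw [sub_add_cancel] at h
    exact eq_sub_of_add_eq h.symm
  have hact_sub : ∀ X a b, act X (a - b) = act X a - act X b := by
    intro X a b
    have h := hact_add X (a - b) b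
    rw [sub_add_cancel] at h
    exact eq_sub_of_add_eq h.symm
  have hdual' : ∀ X Y Z, g Y (conn' X Z) = act X (g Y Z) - g (conn X Y) Z := by
    intro X Y Z
    have h := hdual X Y Z
    exact eq_sub_of_add_eq ((add_comm _ _).trans h.symm)
  intro X Y Z
  apply hg_nondeg
  intro W
  have hflatW : conn ⁅X, Y⁆ W = conn X (conn Y W) - conn Y (conn X W) := by
    have h := hflat X Y W
    rw [hR] at h
    have := sub_eq_zero.mp h
    exact this.symm
  rw [hR', gsubr, gsubr]
  rw [hdual' X W (conn' Y Z), hdual' Y W (conn' X Z), hdual' ⁅X, Y⁆ W Z]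
  rw [hdual' Y W Z, hdual' X W Z, hdual' Y (conn X W) Z, hdual' X (conn Y W) Z]
  rw [hact_sub, hact_sub, hact_bracket, hflatW, gsubl]
  ring
end
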